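/- arXiv:1907.00316 — 3 statements merged into one kernel-verified Lean document; each statement's English description precedes it below -/
import Mathlib

section
/- Let λ : ℕ → ℝ satisfy λ 1 = 0 and λ (t+1) = max ((1 - δ*μ^2) * λ t + μ * g t) 0 for all t ≥ 1, where μ > 0, δ ≥ 0, δ*μ^2 ≤ 1, and g : ℕ → ℝ. Then for all t ≥ 1, μ * ∑_{s=1}^{t} (1 - δ*μ^2)^(t-s) * g s ≤ λ (t+1) ≤ μ * ∑_{s=1}^{t} (1 - δ*μ^2)^(t-s) * |g s|. -/
theorem stmt_0 (μ δ : ℝ) (hμ : 0 < μ) (hδ : 0 ≤ δ) (hδμ : δ * μ ^ 2 ≤ 1)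
    (g lam : ℕ → ℝ) (hlam1 : lam 1 = 0)
    (hrec : ∀ t : ℕ, 1 ≤ t → lam (t + 1) = max ((1 - δ * μ ^ 2) * lam t + μ * g t) 0) :
    ∀ t : ℕ, 1 ≤ t →
      μ * ∑ s ∈ Finset.Icc 1 t, (1 - δ * μ ^ 2) ^ (t - s) * g s ≤ lam (t + 1) ∧
      lam (t + 1) ≤ μ * ∑ s ∈ Finset.Icc 1 t, (1 - δ * μ ^ 2) ^ (t - s) * |g s| := by
  set a : ℝ := 1 - δ * μ ^ 2 with ha
  have ha0 : 0 ≤ a := by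
    have : 0 ≤ δ * μ ^ 2 := mul_nonneg hδ (sq_nonneg μ)
    linarith
  have key : ∀ (x : ℕ → ℝ) (t : ℕ), 1 ≤ t →
      ∑ s ∈ Finset.Icc 1 (t + 1), a ^ (t + 1 - s) * x s
        = a * ∑ s ∈ Finset.Icc 1 t, a ^ (t - s) * x s + x (t + 1) := by
    intro x t ht
    rw [Finset.sum_Icc_succ_top (by omega), Nat.sub_self, pow_zero, one_mul,
      Finset.mul_sum]
    congr 1
    refine Finset.sum_congr rfl fun s hs => ?_
    simp only [Finset.mem_Icc] at hs
    rw [← mul_assoc, ← pow_succ']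
    congr 2
    omega
  intro t ht
  induction t, ht using Nat.le_induction with
  | base =>
    simp only [Finset.Icc_self, Finset.sum_singleton, Nat.sub_self, pow_zero, one_mul]
    rw [hrec 1 le_rfl, hlam1, mul_zero, zero_add]
    constructor
    · exact le_max_left _ _
    · refine max_le ?_ (mul_nonneg hμ.le (abs_nonneg _))
      exact mul_le_mul_of_nonneg_left (le_abs_self _) hμ.le
  | succ t ht ih =>
    obtain ⟨ih1, ih2⟩ := ih
    have hnn : 0 ≤ lam (t + 1) := by rw [hrec t ht]; exact le_max_right _ _
    rw [hrec (t + 1) (by omega), key g t ht, key (fun s => |g s|) t ht]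
    constructor
    · calc μ * (a * ∑ s ∈ Finset.Icc 1 t, a ^ (t - s) * g s + g (t + 1))
          = a * (μ * ∑ s ∈ Finset.Icc 1 t, a ^ (t - s) * g s) + μ * g (t + 1) := by ring
        _ ≤ a * lam (t + 1) + μ * g (t + 1) := by
            have := mul_le_mul_of_nonneg_left ih1 ha0
            linarith
        _ ≤ max (a * lam (t + 1) + μ * g (t + 1)) 0 := le_max_left _ _
    · refine max_le ?_ ?_
      · have h1 : a * lam (t + 1) ≤ a * (μ * ∑ s ∈ Finset.Icc 1 t, a ^ (t - s) * |g s|) :=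
          mul_le_mul_of_nonneg_left ih2 ha0
        have h2 : μ * g (t + 1) ≤ μ * |g (t + 1)| :=
          mul_le_mul_of_nonneg_left (le_abs_self _) hμ.le
        calc a * lam (t + 1) + μ * g (t + 1)
            ≤ a * (μ * ∑ s ∈ Finset.Icc 1 t, a ^ (t - s) * |g s|) + μ * |g (t + 1)| := by
              linarith
          _ = μ * (a * ∑ s ∈ Finset.Icc 1 t, a ^ (t - s) * |g s| + |g (t + 1)|) := by ring
      · refine mul_nonneg hμ.le (add_nonneg (mul_nonneg ha0 ?_) (abs_nonneg _))
        exact Finset.sum_nonneg fun s _ => mul_nonneg (pow_nonneg ha0 _) (abs_nonneg _)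
end

section
/- Let F : ℝ^n → ℝ be differentiable on a convex set K with ∇F antitone with respect to the componentwise order (DR property). Then for any x ∈ K, t ≥ 0, and direction v ∈ ℝ^n with v ⪰ 0 or v ⪯ 0 such that x + t v ∈ K, we have F(x + t*v) ≤ F(x) + t * ⟨∇F(x), v⟩. -/
/-! The derivative of `s ↦ F (x + s • w)` on `[0, 1]` is `⟪∇F (x + s • w), w⟫`. Since `w` has
constant sign, `x + s • w` lies coordinatewise above (or below) `x`, so the antitone gradient makes
this derivative at most its value at `s = 0`; the mean value inequality then bounds `F (x + w)` by
the tangent line at `x`. -/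

open RealInnerProductSpace Set

theorem hasDerivAt_comp_add_smul {E : Type*} [NormedAddCommGroup E] [NormedSpace ℝ E]
    {f : E → ℝ} {x v : E} {s : ℝ} (hf : DifferentiableAt ℝ f (x + s • v)) :
    HasDerivAt (fun r : ℝ => f (x + r • v)) (fderiv ℝ f (x + s • v) v) s := by
  have hline : HasDerivAt (fun r : ℝ => x + r • v) v s := by
    simpa using ((hasDerivAt_id s).smul_const v).const_add x
  exact hf.hasFDerivAt.comp_hasDerivAt s hline

theorem le_add_fderiv_of_fderiv_le_on_segment {E : Type*} [NormedAddCommGroup E]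
    [NormedSpace ℝ E] {f : E → ℝ} {x v : E}
    (hf : ∀ s ∈ Icc (0 : ℝ) 1, DifferentiableAt ℝ f (x + s • v))
    (hle : ∀ s ∈ Ioo (0 : ℝ) 1, fderiv ℝ f (x + s • v) v ≤ fderiv ℝ f x v) :
    f (x + v) ≤ f x + fderiv ℝ f x v := by
  have hφ : ∀ s ∈ Icc (0 : ℝ) 1,
      HasDerivAt (fun r : ℝ => f (x + r • v)) (fderiv ℝ f (x + s • v) v) s :=
    fun s hs => hasDerivAt_comp_add_smul (hf s hs)
  have key := (convex_Icc (0 : ℝ) 1).image_sub_le_mul_sub_of_deriv_le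
    (fun s hs => (hφ s hs).continuousAt.continuousWithinAt)
    (fun s hs => (hφ s (interior_subset hs)).differentiableAt.differentiableWithinAt)
    (C := fderiv ℝ f x v) (fun s hs => by
      rw [interior_Icc] at hs
      rw [(hφ s (Ioo_subset_Icc_self hs)).deriv]
      exact hle s hs)
    0 (left_mem_Icc.2 zero_le_one) 1 (right_mem_Icc.2 zero_le_one) zero_le_one
  simp only [one_smul, zero_smul, add_zero, sub_zero, mul_one] at key
  linarith

theorem inner_le_inner_of_le_of_nonneg {ι : Type*} [Fintype ι] {a b v : EuclideanSpace ℝ ι}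
    (hab : ∀ i, a i ≤ b i) (hv : ∀ i, 0 ≤ v i) : ⟪a, v⟫ ≤ ⟪b, v⟫ := by
  simp only [PiLp.inner_apply, RCLike.inner_apply, conj_trivial]
  exact Finset.sum_le_sum fun i _ => mul_le_mul_of_nonneg_left (hab i) (hv i)

theorem inner_le_inner_of_le_of_nonpos {ι : Type*} [Fintype ι] {a b v : EuclideanSpace ℝ ι}
    (hab : ∀ i, a i ≤ b i) (hv : ∀ i, v i ≤ 0) : ⟪b, v⟫ ≤ ⟪a, v⟫ := by
  simp only [PiLp.inner_apply, RCLike.inner_apply, conj_trivial]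
  exact Finset.sum_le_sum fun i _ => mul_le_mul_of_nonpos_left (hab i) (hv i)

theorem inner_add_smul_le_of_antitone {ι : Type*} [Fintype ι]
    {g : EuclideanSpace ℝ ι → EuclideanSpace ℝ ι} {K : Set (EuclideanSpace ℝ ι)}
    (hg : ∀ x ∈ K, ∀ y ∈ K, (∀ i, x i ≤ y i) → ∀ i, g y i ≤ g x i)
    {x w : EuclideanSpace ℝ ι} {s : ℝ} (hs : 0 ≤ s) (hx : x ∈ K) (hxs : x + s • w ∈ K)
    (hw : (∀ i, 0 ≤ w i) ∨ (∀ i, w i ≤ 0)) :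
    ⟪g (x + s • w), w⟫ ≤ ⟪g x, w⟫ := by
  rcases hw with hw | hw
  · refine inner_le_inner_of_le_of_nonneg (hg x hx _ hxs fun i => ?_) hw
    simpa using mul_nonneg hs (hw i)
  · refine inner_le_inner_of_le_of_nonpos (hg _ hxs x hx fun i => ?_) hw
    simpa using mul_nonpos_of_nonneg_of_nonpos hs (hw i)

theorem stmt_5 (n : ℕ) (F : EuclideanSpace ℝ (Fin n) → ℝ)
    (K : Set (EuclideanSpace ℝ (Fin n))) (hK : Convex ℝ K)
    (hdiff : ∀ x ∈ K, DifferentiableAt ℝ F x)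
    (hDR : ∀ x ∈ K, ∀ y ∈ K, (∀ i, x i ≤ y i) → ∀ i, gradient F y i ≤ gradient F x i)
    (x : EuclideanSpace ℝ (Fin n)) (hx : x ∈ K) (t : ℝ) (ht : 0 ≤ t)
    (v : EuclideanSpace ℝ (Fin n)) (hv : (∀ i, 0 ≤ v i) ∨ (∀ i, v i ≤ 0))
    (hxt : x + t • v ∈ K) :
    F (x + t • v) ≤ F x + t * ⟪gradient F x, v⟫ := by
  have hw : (∀ i, 0 ≤ (t • v) i) ∨ (∀ i, (t • v) i ≤ 0) := by
    simp only [PiLp.smul_apply, smul_eq_mul]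
    exact hv.imp (fun h i => mul_nonneg ht (h i)) fun h i => mul_nonpos_of_nonneg_of_nonpos ht (h i)
  have hseg : ∀ s ∈ Icc (0 : ℝ) 1, x + s • t • v ∈ K := fun s hs => hK.add_smul_mem hx hxt hs
  have hfderiv : ∀ y, fderiv ℝ F y (t • v) = ⟪gradient F y, t • v⟫ := fun y => by
    simp [gradient]
  rw [← real_inner_smul_right, ← hfderiv]
  refine le_add_fderiv_of_fderiv_le_on_segment (fun s hs => hdiff _ (hseg s hs)) fun s hs => ?_
  rw [hfderiv, hfderiv]
  exact inner_add_smul_le_of_antitone hDR hs.1.le hx (hseg s (Ioo_subset_Icc_self hs)) hw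
end

section
/- Let f : ℝ^n → ℝ be differentiable and monotone on ℝ₊^n with antitone gradient (monotone DR-submodular), let x, y ∈ ℝ₊^n. Then f(x ∨ y) ≤ f(x) + ⟨∇f(x), (y - x) ∨ 0⟩, where ∨ denotes the componentwise maximum and (y - x) ∨ 0 the componentwise positive part. -/
/-!
Along the segment from `x` to `x + v` with `v ≥ 0`, every point lies above `x` in the nonnegative
orthant, so the antitone gradient makes the directional derivative `⟪∇f z, v⟫` at most its value at
`x`. The mean value theorem then gives `f (x + v) ≤ f x + ⟪∇f x, v⟫`, and `x ∨ y = x + (y - x) ∨ 0`.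
-/

open RealInnerProductSpace Set

theorem add_le_add_fderiv_of_fderiv_segment_le {E : Type*} [NormedAddCommGroup E]
    [NormedSpace ℝ E] {f : E → ℝ} (hf : Differentiable ℝ f) (x v : E)
    (h : ∀ t ∈ Icc (0 : ℝ) 1, fderiv ℝ f (x + t • v) v ≤ fderiv ℝ f x v) :
    f (x + v) ≤ f x + fderiv ℝ f x v := by
  obtain ⟨z, hz, hmvt⟩ := domain_mvt (fun z _ => (hf z).hasFDerivAt.hasFDerivWithinAt)
    convex_univ (mem_univ x) (mem_univ (x + v))
  rw [segment_eq_image', add_sub_cancel_left] at hz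
  obtain ⟨t, ht, rfl⟩ := hz
  rw [add_sub_cancel_left] at hmvt
  linarith [h t ht]

theorem eq_add_posPart_sub {ι : Type*} {x y m v : EuclideanSpace ℝ ι}
    (hm : ∀ i, m i = max (x i) (y i)) (hv : ∀ i, v i = max (y i - x i) 0) :
    m = x + v := by
  ext i
  rw [PiLp.add_apply, hm, hv, ← max_add_add_left, add_sub_cancel, add_zero, max_comm]

theorem inner_gradient_le_of_antitone_gradient {ι : Type*} [Fintype ι]
    {f : EuclideanSpace ℝ ι → ℝ}
    (hDR : ∀ x y : EuclideanSpace ℝ ι, (∀ i, 0 ≤ x i) → (∀ i, 0 ≤ y i) →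
      (∀ i, x i ≤ y i) → ∀ i, gradient f y i ≤ gradient f x i)
    {x z v : EuclideanSpace ℝ ι} (hx : ∀ i, 0 ≤ x i) (hxz : ∀ i, x i ≤ z i)
    (hv : ∀ i, 0 ≤ v i) :
    ⟪gradient f z, v⟫ ≤ ⟪gradient f x, v⟫ := by
  have hz : ∀ i, 0 ≤ z i := fun i => (hx i).trans (hxz i)
  simp only [PiLp.inner_apply, RCLike.inner_apply, conj_trivial]
  exact Finset.sum_le_sum fun i _ => mul_le_mul_of_nonneg_left (hDR x z hx hz hxz i) (hv i)

theorem stmt_17_general (n : ℕ) (f : EuclideanSpace ℝ (Fin n) → ℝ)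
    (hdiff : Differentiable ℝ f)
    (hDR : ∀ x y : EuclideanSpace ℝ (Fin n), (∀ i, 0 ≤ x i) → (∀ i, 0 ≤ y i) →
      (∀ i, x i ≤ y i) → ∀ i, gradient f y i ≤ gradient f x i)
    (x y : EuclideanSpace ℝ (Fin n)) (hx : ∀ i, 0 ≤ x i)
    (m v : EuclideanSpace ℝ (Fin n))
    (hm : ∀ i, m i = max (x i) (y i)) (hv : ∀ i, v i = max (y i - x i) 0) :
    f m ≤ f x + ⟪gradient f x, v⟫ := by
  have hv0 : ∀ i, 0 ≤ v i := fun i => (hv i) ▸ le_max_right _ _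
  rw [eq_add_posPart_sub hm hv, inner_gradient_left]
  refine add_le_add_fderiv_of_fderiv_segment_le hdiff x v fun t ht => ?_
  rw [← inner_gradient_left, ← inner_gradient_left]
  exact inner_gradient_le_of_antitone_gradient hDR hx
    (fun i => le_add_of_nonneg_right (mul_nonneg ht.1 (hv0 i))) hv0

theorem stmt_17 (n : ℕ) (f : EuclideanSpace ℝ (Fin n) → ℝ)
    (hdiff : Differentiable ℝ f)
    (hmono : ∀ x y : EuclideanSpace ℝ (Fin n), (∀ i, 0 ≤ x i) → (∀ i, 0 ≤ y i) →
      (∀ i, x i ≤ y i) → f x ≤ f y)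
    (hDR : ∀ x y : EuclideanSpace ℝ (Fin n), (∀ i, 0 ≤ x i) → (∀ i, 0 ≤ y i) →
      (∀ i, x i ≤ y i) → ∀ i, gradient f y i ≤ gradient f x i)
    (x y : EuclideanSpace ℝ (Fin n)) (hx : ∀ i, 0 ≤ x i) (hy : ∀ i, 0 ≤ y i)
    (m v : EuclideanSpace ℝ (Fin n))
    (hm : ∀ i, m i = max (x i) (y i)) (hv : ∀ i, v i = max (y i - x i) 0) :
    f m ≤ f x + ⟪gradient f x, v⟫ :=
  stmt_17_general n f hdiff hDR x y hx m v hm hv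
end
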